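/- The specification S = S_pq ∪ S_pqs is a model of clause (2): for every ground instance pqs(s(i),cs,us,[t|ds]) ← pqs(i,cs,[t1|us],ds), pq(s(i),cs,us,ds), if both body atoms are in S then the head is in S. -/

import Mathlib

/-- Ground terms of the Herbrand universe: numerals built from `zero`/`succ`,
list constructors `cons`/`nil`, and infinitely many other constants `sym n`. -/
inductive Term : Type
  | zero : Term
  | succ : Term → Term
  | cons : Term → Term → Term
  | nil  : Term
  | sym  : ℕ → Term
deriving DecidableEq

/-- The numeral `sⁱ(0)` representing a natural number. -/
def num : ℕ → Term
  | 0 => Term.zero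
  | n + 1 => Term.succ (num n)

/-- `NthMember k e t` : `e` is the `k`-th member (k ≥ 1) of the term `t`,
i.e. `t = [e₁,…,e_{k-1}, e | t']`. -/
def NthMember : ℕ → Term → Term → Prop
  | 0, _, _ => False
  | 1, e, t => ∃ r, t = Term.cons e r
  | k + 2, e, t => ∃ h r, t = Term.cons h r ∧ NthMember (k + 1) e r

/-- `e` is a member of the term `t`. -/
def IsMember (e t : Term) : Prop := ∃ k, NthMember k e t

/-- `t` is a (proper, nil-terminated) list. -/
inductive IsList : Term → Prop
  | nil : IsList Term.nil
  | cons (h t : Term) : IsList t → IsList (Term.cons h t)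

/-- The members of `cs` are pairwise distinct (no member occurs at two positions). -/
def DistinctMembers (cs : Term) : Prop :=
  ∀ k1 k2 e, NthMember k1 e cs → NthMember k2 e cs → k1 = k2

/-- `(cs,us,ds)` represents a correct placement of queens `1,…,m`
in the context of row `i` (Definition 3 of the paper):
`cs` is a list of distinct members containing `1,…,m`; the up diagonal
numbers `k+j-i` and down diagonal numbers `k+i-j` of the queens `1,…,m`
(queen `j` being the `k`-th member of `cs`) are pairwise distinct; and every
positive such diagonal number `l` of queen `j` is reflected by `j` being the
`l`-th member of `us` (resp. `ds`). -/
def CorrectUpTo (m i : ℕ) (cs us ds : Term) : Prop :=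
  m ≤ i ∧
  IsList cs ∧ DistinctMembers cs ∧
  (∀ j, 1 ≤ j → j ≤ m → IsMember (num j) cs) ∧
  (∀ j1 j2 k1 k2, 1 ≤ j1 → j1 ≤ m → 1 ≤ j2 → j2 ≤ m →
     NthMember k1 (num j1) cs → NthMember k2 (num j2) cs →
     (k1 + j1 : ℤ) - i = (k2 + j2 : ℤ) - i → j1 = j2) ∧
  (∀ j1 j2 k1 k2, 1 ≤ j1 → j1 ≤ m → 1 ≤ j2 → j2 ≤ m →
     NthMember k1 (num j1) cs → NthMember k2 (num j2) cs →
     (k1 + i : ℤ) - j1 = (k2 + i : ℤ) - j2 → j1 = j2) ∧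
  (∀ j k (l : ℤ), 1 ≤ j → j ≤ m → NthMember k (num j) cs →
     (k + j : ℤ) - i = l → 0 < l → NthMember l.toNat (num j) us) ∧
  (∀ j k (l : ℤ), 1 ≤ j → j ≤ m → NthMember k (num j) cs →
     (k + i : ℤ) - j = l → 0 < l → NthMember l.toNat (num j) ds)

/-- Ground atoms of the n-queens program. -/
inductive Atom : Type
  | pq  (i cs us ds : Term)
  | pqs (i cs us ds : Term)
deriving DecidableEq

/-- A ground clause: a head together with the list of body atoms. -/
abbrev Clause := Atom × List Atom

/-- A (ground instantiation of a) definite program. -/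
abbrev Program := Set Clause

/-- `S` is an Herbrand model of `P`. -/
def IsModel (S : Set Atom) (P : Program) : Prop :=
  ∀ c ∈ P, (∀ b ∈ c.2, b ∈ S) → c.1 ∈ S

/-- The least Herbrand model of `P`. -/
def LHM (P : Program) : Set Atom := ⋂₀ {S | IsModel S P}

/-- A ground atom `A` is covered by program `P` w.r.t. specification `S`. -/
def Covered (P : Program) (S : Set Atom) (A : Atom) : Prop :=
  ∃ c ∈ P, c.1 = A ∧ ∀ b ∈ c.2, b ∈ S

/-- The set of ground instances of the two pq clauses:
`pq(I,[I|_],[I|_],[I|_])` and `pq(I,[_|Cs],[_|Us],[_|Ds]) ← pq(I,Cs,Us,Ds)`. -/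
def PQprog : Program :=
  {c | (∃ i x y z, c = (Atom.pq i (Term.cons i x) (Term.cons i y) (Term.cons i z), [])) ∨
       (∃ i c' cs u us d ds,
          c = (Atom.pq i (Term.cons c' cs) (Term.cons u us) (Term.cons d ds),
               [Atom.pq i cs us ds]))}

/-- The set of ground instances of the four clauses of NQUEENS. -/
def NQprog : Program :=
  {c | (∃ x y z, c = (Atom.pqs Term.zero x y z, [])) ∨
       (∃ i cs us u d ds,
          c = (Atom.pqs (Term.succ i) cs us (Term.cons d ds),
               [Atom.pqs i cs (Term.cons u us) ds, Atom.pq (Term.succ i) cs us ds])) ∨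
       (∃ i x y z, c = (Atom.pq i (Term.cons i x) (Term.cons i y) (Term.cons i z), [])) ∨
       (∃ i c' cs u us d ds,
          c = (Atom.pq i (Term.cons c' cs) (Term.cons u us) (Term.cons d ds),
               [Atom.pq i cs us ds]))}

/-- The specification `S_pq`. -/
def Spq : Set Atom :=
  {a | ∃ i cs us ds k, a = Atom.pq i cs us ds ∧ 0 < k ∧
       NthMember k i cs ∧ NthMember k i us ∧ NthMember k i ds}

/-- The correctness specification `S_pqs`. -/
def Spqs : Set Atom :=
  {a | (∃ cs us ds, a = Atom.pqs Term.zero cs us ds) ∨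
       (∃ i cs us t ds, 0 < i ∧ a = Atom.pqs (num i) cs us (Term.cons t ds) ∧
          (∀ j, 1 ≤ j → j ≤ i → IsMember (num j) cs) ∧
          (IsList cs → DistinctMembers cs → CorrectUpTo i i cs us ds))}

/-- The completeness specification `S⁰_pqs`. -/
def S0pqs : Set Atom :=
  {a | ∃ i cs us t ds, 0 < i ∧ a = Atom.pqs (num i) cs us (Term.cons t ds) ∧
        CorrectUpTo i i cs us ds}

/-- All atoms `pqs(0,cs,us,ds)`. -/
def SpqsZero : Set Atom :=
  {a | ∃ cs us ds, a = Atom.pqs Term.zero cs us ds}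

/-- The level mapping on ground terms: `|[h|t]| = 1+|t|`, `|s(t)| = 1+|t|`,
`|f(…)| = 0` otherwise. -/
def tlvl : Term → ℕ
  | Term.cons _ t => 1 + tlvl t
  | Term.succ t => 1 + tlvl t
  | _ => 0

/-- The level mapping on ground atoms. -/
def alvl : Atom → ℕ
  | Atom.pqs i cs _ _ => tlvl i + tlvl cs
  | Atom.pq _ cs _ _ => tlvl cs

/-- `t` is a list of length `n`. -/
inductive IsListLen : Term → ℕ → Prop
  | nil : IsListLen Term.nil 0
  | cons (h t : Term) (n : ℕ) : IsListLen t n → IsListLen (Term.cons h t) (n + 1)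

/-! Queen `i + 1` sits at the position `k` at which `s(i)` is the `k`-th member of `cs`, `us` and
`ds`; in row `i + 1` both of its diagonal numbers equal `k`. Passing from row `i` to row `i + 1`
lowers the up diagonal numbers of the old queens by one and raises their down diagonal numbers by
one, which matches replacing `[t1|us]` by `us` and the tail of `ds` by `ds`. An old queen `j` on a
diagonal of the new one would therefore, by correctness for row `i`, also be the `k`-th member of
`us` or of `ds`, forcing `j = i + 1`. -/

theorem num_injective : Function.Injective num
  | 0, 0, _ => rfl
  | _ + 1, _ + 1, h => congrArg Nat.succ (num_injective (Term.succ.inj h))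

namespace NthMember

variable {k : ℕ} {e x r t : Term}

theorem pos (h : NthMember k e t) : 0 < k := by
  cases k with
  | zero => exact h.elim
  | succ n => exact n.succ_pos

theorem exists_cons (h : NthMember k e t) : ∃ x r, t = Term.cons x r := by
  match k, h with
  | 1, ⟨r, hr⟩ => exact ⟨e, r, hr⟩
  | _ + 2, ⟨x, r, hr, _⟩ => exact ⟨x, r, hr⟩

theorem cons (h : NthMember k e r) (x : Term) : NthMember (k + 1) e (Term.cons x r) := by
  cases k with
  | zero => exact h.elim
  | succ n => exact ⟨x, r, rfl, h⟩

theorem of_cons (h : NthMember (k + 1) e (Term.cons x r)) (hk : 0 < k) : NthMember k e r := by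
  obtain ⟨n, rfl⟩ := Nat.exists_eq_add_of_lt hk
  obtain ⟨_, _, hxr, hr⟩ := h
  cases hxr
  simpa using hr

theorem unique {e' : Term} (h : NthMember k e t) (h' : NthMember k e' t) : e = e' := by
  induction k generalizing t with
  | zero => exact h.elim
  | succ n ih =>
    cases n with
    | zero =>
      obtain ⟨_, rfl⟩ := h
      obtain ⟨_, he⟩ := h'
      exact (Term.cons.inj he).1
    | succ n =>
      obtain ⟨_, _, rfl, hr⟩ := h
      obtain ⟨_, _, he, hr'⟩ := h'
      cases he
      exact ih hr hr'

end NthMember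

theorem forall_isMember_succ {m k : ℕ} {cs : Term}
    (hmem : ∀ j, 1 ≤ j → j ≤ m → IsMember (num j) cs) (hc : NthMember k (num (m + 1)) cs) :
    ∀ j, 1 ≤ j → j ≤ m + 1 → IsMember (num j) cs := by
  intro j hj1 hj
  rcases Nat.le_succ_iff.1 hj with hj | rfl
  · exact hmem j hj1 hj
  · exact ⟨k, hc⟩

theorem correctUpTo_zero {cs us ds : Term} (hl : IsList cs) (hdist : DistinctMembers cs) :
    CorrectUpTo 0 0 cs us ds :=
  ⟨le_rfl, hl, hdist, by omega, by omega, by omega, by omega, by omega⟩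

namespace CorrectUpTo

variable {m i j k l : ℕ} {cs us ds : Term}

theorem nthMember_up (h : CorrectUpTo m i cs us ds) (hj1 : 1 ≤ j) (hjm : j ≤ m)
    (hk : NthMember k (num j) cs) (hl : k + j = l + i) (hl0 : 0 < l) :
    NthMember l (num j) us := by
  simpa using h.2.2.2.2.2.2.1 j k l hj1 hjm hk (by omega) (by omega)

theorem nthMember_down (h : CorrectUpTo m i cs us ds) (hj1 : 1 ≤ j) (hjm : j ≤ m)
    (hk : NthMember k (num j) cs) (hl : k + i = l + j) (hl0 : 0 < l) :
    NthMember l (num j) ds := by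
  simpa using h.2.2.2.2.2.2.2 j k l hj1 hjm hk (by omega) (by omega)

theorem succ {u d : Term} (h : CorrectUpTo m m cs (Term.cons u us) ds)
    (hc : NthMember k (num (m + 1)) cs) (hu : NthMember k (num (m + 1)) us)
    (hd : NthMember k (num (m + 1)) (Term.cons d ds)) :
    CorrectUpTo (m + 1) (m + 1) cs us (Term.cons d ds) := by
  obtain ⟨-, hl, hdist, hmem, hup, hdown, -, -⟩ := id h
  have hk := hc.pos
  have queen_cases : ∀ j k', 1 ≤ j → j ≤ m + 1 → NthMember k' (num j) cs →
      j ≤ m ∨ (j = m + 1 ∧ k' = k) := by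
    intro j k' _ hj hk'
    rcases Nat.le_succ_iff.1 hj with hj | rfl
    · exact .inl hj
    · exact .inr ⟨rfl, hdist _ _ _ hk' hc⟩
  have up_ne : ∀ j k', 1 ≤ j → j ≤ m → NthMember k' (num j) cs → k' + j ≠ k + (m + 1) := by
    intro j k' hj1 hjm hk' heq
    have hj := (h.nthMember_up hj1 hjm hk' (l := k + 1) (by omega) (by omega)).of_cons hk
    have := num_injective (hj.unique hu)
    omega
  have down_ne : ∀ j k', 1 ≤ j → j ≤ m → NthMember k' (num j) cs → k' + (m + 1) ≠ k + j := by
    intro j k' hj1 hjm hk' heq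
    have hk'0 := hk'.pos
    obtain ⟨l, rfl⟩ : ∃ l, k = l + 1 := ⟨k - 1, by omega⟩
    have hj := h.nthMember_down hj1 hjm hk' (l := l) (by omega) (by omega)
    have := num_injective (hj.unique (hd.of_cons (by omega)))
    omega
  refine ⟨le_rfl, hl, hdist, forall_isMember_succ hmem hc, ?_, ?_, ?_, ?_⟩
  · intro j1 j2 k1 k2 hj1 hjm1 hj2 hjm2 hk1 hk2 heq
    rcases queen_cases j1 k1 hj1 hjm1 hk1 with hjm1 | ⟨rfl, rfl⟩ <;>
      rcases queen_cases j2 k2 hj2 hjm2 hk2 with hjm2 | ⟨rfl, rfl⟩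
    · exact hup j1 j2 k1 k2 hj1 hjm1 hj2 hjm2 hk1 hk2 (by omega)
    · exact absurd (by omega) (up_ne j1 k1 hj1 hjm1 hk1)
    · exact absurd (by omega) (up_ne j2 k2 hj2 hjm2 hk2)
    · rfl
  · intro j1 j2 k1 k2 hj1 hjm1 hj2 hjm2 hk1 hk2 heq
    rcases queen_cases j1 k1 hj1 hjm1 hk1 with hjm1 | ⟨rfl, rfl⟩ <;>
      rcases queen_cases j2 k2 hj2 hjm2 hk2 with hjm2 | ⟨rfl, rfl⟩
    · exact hdown j1 j2 k1 k2 hj1 hjm1 hj2 hjm2 hk1 hk2 (by omega)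
    · exact absurd (by omega) (down_ne j1 k1 hj1 hjm1 hk1)
    · exact absurd (by omega) (down_ne j2 k2 hj2 hjm2 hk2)
    · rfl
  · intro j k' l hj1 hj hk' hl hl0
    lift l to ℕ using hl0.le
    rw [Int.toNat_natCast]
    rcases queen_cases j k' hj1 hj hk' with hjm | ⟨rfl, rfl⟩
    · exact (h.nthMember_up hj1 hjm hk' (l := l + 1) (by omega) (by omega)).of_cons (by omega)
    · exact (show l = k' by omega) ▸ hu
  · intro j k' l hj1 hj hk' hl hl0
    lift l to ℕ using hl0.le
    rw [Int.toNat_natCast]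
    rcases queen_cases j k' hj1 hj hk' with hjm | ⟨rfl, rfl⟩
    · have hk'0 := hk'.pos
      obtain ⟨l, rfl⟩ : ∃ l', l = l' + 1 := ⟨l - 1, by omega⟩
      exact (h.nthMember_down hj1 hjm hk' (l := l) (by omega) (by omega)).cons d
    · exact (show l = k' by omega) ▸ hd

end CorrectUpTo

theorem exists_nthMember_of_pq_mem {i cs us ds : Term} (h : Atom.pq i cs us ds ∈ Spq ∪ Spqs) :
    ∃ k, NthMember k i cs ∧ NthMember k i us ∧ NthMember k i ds := by
  rcases h with ⟨_, _, _, _, k, heq, -, hc, hu, hd⟩ | ⟨_, _, _, heq⟩ | ⟨_, _, _, _, _, -, heq, -⟩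
  · cases heq
    exact ⟨k, hc, hu, hd⟩
  all_goals cases heq

theorem exists_correctUpTo_of_pqs_mem {i cs us d ds : Term}
    (h : Atom.pqs i cs us (Term.cons d ds) ∈ Spq ∪ Spqs) :
    ∃ m, i = num m ∧ (∀ j, 1 ≤ j → j ≤ m → IsMember (num j) cs) ∧
      (IsList cs → DistinctMembers cs → CorrectUpTo m m cs us ds) := by
  rcases h with ⟨_, _, _, _, _, heq, -⟩ | ⟨_, _, _, heq⟩ | ⟨m, _, _, _, _, -, heq, hmem, hcorr⟩
  · cases heq
  · cases heq
    exact ⟨0, rfl, by omega, correctUpTo_zero⟩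
  · cases heq
    exact ⟨m, rfl, hmem, hcorr⟩

/-- The specification `S = S_pq ∪ S_pqs` is a model of clause (2): for every
ground instance `pqs(s(i),cs,us,[t|ds]) ← pqs(i,cs,[t1|us],ds), pq(s(i),cs,us,ds)`,
if both body atoms are in `S` then the head is in `S`. -/
theorem S_models_clause2 (i cs us t t1 ds : Term)
    (hB1 : Atom.pqs i cs (Term.cons t1 us) ds ∈ Spq ∪ Spqs)
    (hB2 : Atom.pq (Term.succ i) cs us ds ∈ Spq ∪ Spqs) :
    Atom.pqs (Term.succ i) cs us (Term.cons t ds) ∈ Spq ∪ Spqs := by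
  obtain ⟨k, hc, hu, hd⟩ := exists_nthMember_of_pq_mem hB2
  obtain ⟨d, ds, rfl⟩ := hd.exists_cons
  obtain ⟨m, rfl, hmem, hcorr⟩ := exists_correctUpTo_of_pqs_mem hB1
  exact .inr <| .inr ⟨m + 1, cs, us, t, .cons d ds, m.succ_pos, rfl,
    forall_isMember_succ hmem hc, fun hl hdist => (hcorr hl hdist).succ hc hu hd⟩
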